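/- Let l ∈ ℚ and define x₁ : (0,1) → ℝ by x₁(z) = z^(3/4)·(1−z)^((2+l)/4), with real powers interpreted via rpow. Then x₁ is twice differentiable on (0,1) and satisfies x₁''(z) = r(z)·x₁(z) for all z ∈ (0,1), where r(z) = −3/(16 z²) + (l² − 4)/(16 (1−z)²) − 3(l+2)/(8 z (1−z)). -/

import Mathlib

/-- The algebraic solution `x₁(z) = z^{3/4}(1−z)^{(2+l)/4}` of the reduced
variational equation `X'' = r(z)X` with
`r(z) = −3/(16z²) + (l²−4)/(16(1−z)²) − 3(l+2)/(8z(1−z))`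
(equation (eq:X_sol_1) of the paper): `x₁` is twice differentiable on `(0,1)`
and satisfies the equation there. -/
theorem x1_solves_reduced_equation (l : ℚ) :
    ∃ x₁' : ℝ → ℝ,
      (∀ z ∈ Set.Ioo (0 : ℝ) 1,
        HasDerivAt (fun z : ℝ => z ^ ((3 : ℝ)/4) * (1 - z) ^ ((2 + (l : ℝ))/4))
          (x₁' z) z) ∧
      (∀ z ∈ Set.Ioo (0 : ℝ) 1,
        HasDerivAt x₁'
          ((-3 / (16 * z ^ 2) + ((l : ℝ) ^ 2 - 4) / (16 * (1 - z) ^ 2)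
              - 3 * ((l : ℝ) + 2) / (8 * z * (1 - z)))
            * (z ^ ((3 : ℝ)/4) * (1 - z) ^ ((2 + (l : ℝ))/4))) z) := by
  set a : ℝ := (3 : ℝ)/4 with ha
  set b : ℝ := (2 + (l : ℝ))/4 with hb
  refine ⟨fun z => a * z ^ (a - 1) * (1 - z) ^ b
      + z ^ a * (-1 * b * (1 - z) ^ (b - 1)), ?_, ?_⟩
  · rintro z ⟨hz, hz1⟩
    have h1z : (0:ℝ) < 1 - z := by linarith
    have d1 : HasDerivAt (fun z : ℝ => z ^ a) (a * z ^ (a - 1)) z := by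
      simpa [mul_comm] using Real.hasDerivAt_rpow_const (x := z) (p := a) (Or.inl hz.ne')
    have d2 : HasDerivAt (fun z : ℝ => (1 - z) ^ b) (-1 * b * (1 - z) ^ (b - 1)) z := by
      exact ((hasDerivAt_id z).const_sub 1).rpow_const (Or.inl h1z.ne')
    exact d1.mul d2
  · rintro z ⟨hz, hz1⟩
    have h1z : (0:ℝ) < 1 - z := by linarith
    have d1 : HasDerivAt (fun z : ℝ => z ^ (a-1)) ((a-1) * z ^ (a - 1 - 1)) z := by
      simpa [mul_comm] using Real.hasDerivAt_rpow_const (x := z) (p := a-1) (Or.inl hz.ne')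
    have d1' : HasDerivAt (fun z : ℝ => z ^ a) (a * z ^ (a - 1)) z := by
      simpa [mul_comm] using Real.hasDerivAt_rpow_const (x := z) (p := a) (Or.inl hz.ne')
    have d2 : HasDerivAt (fun z : ℝ => (1 - z) ^ b) (-1 * b * (1 - z) ^ (b - 1)) z :=
      ((hasDerivAt_id z).const_sub 1).rpow_const (Or.inl h1z.ne')
    have d2' : HasDerivAt (fun z : ℝ => (1 - z) ^ (b-1)) (-1 * (b-1) * (1 - z) ^ (b - 1 - 1)) z :=
      ((hasDerivAt_id z).const_sub 1).rpow_const (Or.inl h1z.ne')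
    have D := ((d1.const_mul a).mul d2).add (d1'.mul (d2'.const_mul (-1 * b)))
    refine D.congr_deriv ?_
    have e1 : z ^ (a - 1) = z ^ a / z := by
      rw [Real.rpow_sub hz, Real.rpow_one]
    have e2 : z ^ (a - 1 - 1) = z ^ a / z / z := by
      rw [Real.rpow_sub hz, Real.rpow_sub hz, Real.rpow_one]
    have e3 : (1 - z) ^ (b - 1) = (1 - z) ^ b / (1 - z) := by
      rw [Real.rpow_sub h1z, Real.rpow_one]
    have e4 : (1 - z) ^ (b - 1 - 1) = (1 - z) ^ b / (1 - z) / (1 - z) := by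
      rw [Real.rpow_sub h1z, Real.rpow_sub h1z, Real.rpow_one]
    rw [e1, e2, e3, e4, ha, hb]
    field_simp
    ring
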